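/- Let n ≥ 1 be an integer, θ > 0 and c > −1 real. Then ∫_{λ_1 > λ_2 > ... > λ_n > 0} (∏_{k=1}^n λ_k^c e^{−λ_k}) · ∏_{1≤j<k≤n} (λ_j − λ_k)(λ_j^θ − λ_k^θ) dλ_1⋯dλ_n = (∏_{l=1}^n Γ(θ(l−1) + c + 1)) · θ^{n(n−1)/2} · ∏_{l=1}^{n−1} l!. -/

import Mathlib

/-!
Writing the two Vandermonde products as determinants, the integrand becomes
`det [λ_k^c e^{-λ_k} λ_k^i] · det [(λ_k^θ)^i]`, a symmetric function of `λ`. Almost every point of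
the positive orthant has exactly one decreasing rearrangement, so the integral over the ordered
chamber is `1/n!` times the integral over the orthant. Andréief's identity evaluates the latter as
`n! · det [∫₀^∞ y^(c+i+θj) e^{-y} dy] = n! · det [Γ(θj + c + 1 + i)]`. Factoring `Γ(θj + c + 1)` out
of column `j` leaves the rising factorials `(θj + c + 1)_i`, a matrix of monic polynomials of
degree `i` evaluated at the arithmetic progression `θj + c + 1`, whose determinant is the
Vandermonde determinant `θ^(n(n-1)/2) ∏_{l<n} l!`.
-/

open MeasureTheory Finset Matrix Equiv Function

theorem Equiv.Perm.intCast_sign_mul_self {R : Type*} [Ring R] {ι : Type*} [DecidableEq ι]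
    [Fintype ι] (σ : Perm ι) : ((Perm.sign σ : ℤ) : R) * (Perm.sign σ : ℤ) = 1 := by
  rw [← Int.cast_mul, Int.units_coe_mul_self, Int.cast_one]

namespace Matrix

variable {R : Type*} [CommRing R]

theorem det_vandermonde_natCast (n : ℕ) :
    (vandermonde fun i : Fin n => (i : R)).det = ∏ l ∈ range n, (l.factorial : R) := by
  cases n with
  | zero => simp
  | succ m =>
    rw [det_vandermonde_id_eq_superFactorial, ← Nat.prod_range_succ_factorial, Nat.cast_prod]

variable {n : ℕ}

theorem sum_perm_sign_mul_sign_mul_prod (M : Matrix (Fin n) (Fin n) R) :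
    ∑ σ : Perm (Fin n), ∑ τ : Perm (Fin n),
      ((Perm.sign σ : ℤ) : R) * (Perm.sign τ : ℤ) * ∏ k, M (σ k) (τ k) = n.factorial * M.det := by
  have row_sum (σ : Perm (Fin n)) :
      ∑ τ : Perm (Fin n), ((Perm.sign σ : ℤ) : R) * (Perm.sign τ : ℤ) * ∏ k, M (σ k) (τ k) =
        M.det := by
    have h := det_apply' (M.submatrix σ id)ᵀ
    rw [det_transpose, det_permute] at h
    simp only [transpose_apply, submatrix_apply, id] at h
    rw [← one_mul M.det, ← σ.intCast_sign_mul_self, mul_assoc, h, mul_sum]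
    simp only [mul_assoc]
  simp [row_sum, Fintype.card_perm]

variable {α : Type*} (f g : Fin n → α → R) (x : Fin n → α)

theorem det_mul_det_eq_sum_perm :
    (of fun i k => f i (x k)).det * (of fun i k => g i (x k)).det =
      ∑ σ : Perm (Fin n), ∑ τ : Perm (Fin n),
        ((Perm.sign σ : ℤ) : R) * (Perm.sign τ : ℤ) * ∏ k, f (σ k) (x k) * g (τ k) (x k) := by
  simp only [det_apply', sum_mul_sum, prod_mul_distrib, of_apply]
  exact sum_congr rfl fun σ _ => sum_congr rfl fun τ _ => by ring

theorem det_mul_det_comp_perm (σ : Perm (Fin n)) :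
    (of fun i k => f i ((x ∘ σ) k)).det * (of fun i k => g i ((x ∘ σ) k)).det =
      (of fun i k => f i (x k)).det * (of fun i k => g i (x k)).det := by
  have hperm (h : Fin n → α → R) :
      (of fun i k => h i ((x ∘ σ) k)).det = (Perm.sign σ : ℤ) * (of fun i k => h i (x k)).det :=
    det_permute' σ (of fun i k => h i (x k))
  rw [hperm, hperm, mul_mul_mul_comm, σ.intCast_sign_mul_self, one_mul]

theorem prod_mul_prod_Ioi_sub_mul_sub (w v u : Fin n → R) :
    (∏ k, w k) * ∏ j, ∏ k ∈ Ioi j, ((v j - v k) * (u j - u k)) =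
      (of fun i k : Fin n => w k * v k ^ (i : ℕ)).det *
        (of fun i k : Fin n => u k ^ (i : ℕ)).det := by
  have hv : (of fun i k : Fin n => w k * v k ^ (i : ℕ)) =
      of fun i k => w k * (vandermonde v)ᵀ i k := rfl
  have hu : (of fun i k : Fin n => u k ^ (i : ℕ)) = (vandermonde u)ᵀ := rfl
  rw [hv, hu, det_mul_row, det_transpose, det_transpose, mul_assoc]
  congr 1
  rw [det_vandermonde, det_vandermonde, ← prod_mul_distrib]
  refine prod_congr rfl fun j _ => ?_
  rw [← prod_mul_distrib]
  exact prod_congr rfl fun k _ => by ring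

theorem det_vandermonde_mul (b : R) (v : Fin n → R) :
    (vandermonde fun i => b * v i).det = b ^ (n * (n - 1) / 2) * (vandermonde v).det := by
  have h : vandermonde (fun i => b * v i) =
      of fun i (j : Fin n) => b ^ (j : ℕ) * vandermonde v i j := by
    ext i j; simp [vandermonde_apply, mul_pow]
  rw [h, det_mul_row, prod_pow_eq_pow_sum, Fin.sum_univ_eq_sum_range (fun j => j), sum_range_id]

end Matrix

section Andreief

variable {α : Type*} [MeasurableSpace α] {μ : Measure α} [SigmaFinite μ] {n : ℕ}
  {f g : Fin n → α → ℝ}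

theorem integrable_det_mul_det (hfg : ∀ i j, Integrable (fun y => f i y * g j y) μ) :
    Integrable (fun x : Fin n → α => (of fun i k => f i (x k)).det * (of fun i k => g i (x k)).det)
      (Measure.pi fun _ => μ) := by
  simp_rw [det_mul_det_eq_sum_perm]
  exact integrable_finsetSum _ fun σ _ => integrable_finsetSum _ fun τ _ =>
    (Integrable.fintype_prod fun k => hfg (σ k) (τ k)).const_mul _

theorem integral_det_mul_det (hfg : ∀ i j, Integrable (fun y => f i y * g j y) μ) :
    ∫ x, (of fun i k => f i (x k)).det * (of fun i k => g i (x k)).det ∂(Measure.pi fun _ => μ) =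
      n.factorial * (of fun i j => ∫ y, f i y * g j y ∂μ).det := by
  have hint (σ τ : Perm (Fin n)) :=
    Integrable.fintype_prod (μ := fun _ => μ) fun k => hfg (σ k) (τ k)
  simp_rw [det_mul_det_eq_sum_perm]
  calc
    _ = ∑ σ : Perm (Fin n), ∑ τ : Perm (Fin n), ((Perm.sign σ : ℤ) : ℝ) * (Perm.sign τ : ℤ) *
        ∏ k, ∫ y, f (σ k) y * g (τ k) y ∂μ := by
      rw [integral_finsetSum _ fun σ _ => integrable_finsetSum _ fun τ _ => (hint σ τ).const_mul _]
      refine sum_congr rfl fun σ _ => ?_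
      rw [integral_finsetSum _ fun τ _ => (hint σ τ).const_mul _]
      refine sum_congr rfl fun τ _ => ?_
      rw [integral_const_mul, integral_fintype_prod_eq_prod fun k y => f (σ k) y * g (τ k) y]
    _ = _ := sum_perm_sign_mul_sign_mul_prod (of fun i j => ∫ y, f i y * g j y ∂μ)

end Andreief

theorem ae_injective {ι : Type*} [Fintype ι] : ∀ᵐ x : ι → ℝ, Injective x := by
  refine ae_all_iff.2 fun i => ae_all_iff.2 fun j => ?_
  rcases eq_or_ne i j with rfl | hij
  · exact Filter.Eventually.of_forall fun _ _ => rfl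
  set L : (ι → ℝ) →ₗ[ℝ] ℝ := (LinearMap.proj i : (ι → ℝ) →ₗ[ℝ] ℝ) - LinearMap.proj j
  have hL : LinearMap.ker L ≠ ⊤ := fun h => by
    classical
    have h1 : Pi.single i 1 ∈ LinearMap.ker L := h ▸ Submodule.mem_top
    simp [L, hij.symm] at h1
  filter_upwards [measure_eq_zero_iff_ae_notMem.1 (Measure.addHaar_submodule volume _ hL)]
    with x hx hxij
  exact absurd (by simp [L, hxij]) hx

section Rearrangement

variable {n : ℕ}

theorem Equiv.Perm.eq_of_strictAnti_comp {α : Type*} [LinearOrder α] {x : Fin n → α}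
    {σ τ : Perm (Fin n)} (hσ : StrictAnti (x ∘ σ)) (hτ : StrictAnti (x ∘ τ)) : σ = τ := by
  have hmono : StrictMono fun k => σ.symm (τ k) := fun a b hab =>
    hσ.lt_iff_gt.1 (by simpa using hτ hab)
  refine Equiv.ext fun k => ?_
  simpa using congrArg σ (congrFun hmono.eq_id k).symm

theorem exists_unique_strictAnti_comp_perm {α : Type*} [LinearOrder α] {x : Fin n → α}
    (hx : Injective x) : ∃! σ : Perm (Fin n), StrictAnti (x ∘ σ) := by
  have hsort : StrictAnti (x ∘ (Fin.revPerm.trans (Tuple.sort x))) :=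
    ((Tuple.monotone_sort x).comp_antitone Fin.rev_anti).strictAnti_of_injective
      (hx.comp (Fin.revPerm.trans (Tuple.sort x)).injective)
  exact ⟨_, hsort, fun τ hτ => Perm.eq_of_strictAnti_comp hτ hsort⟩

variable {E : Type*} [NormedAddCommGroup E] [NormedSpace ℝ E] {F : (Fin n → ℝ) → E}

theorem integral_eq_factorial_smul_setIntegral_strictAnti
    (hF : ∀ (σ : Perm (Fin n)) x, F (x ∘ σ) = F x) (hFi : Integrable F) :
    ∫ x, F x = (n.factorial : ℝ) • ∫ x in {x | StrictAnti x}, F x := by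
  set A : Set (Fin n → ℝ) := {x | StrictAnti x}
  have hA : MeasurableSet A := by
    simp only [A, StrictAnti, Set.ofPred_forall]
    exact .iInter fun a => .iInter fun b => .iInter fun _ =>
      measurableSet_lt (measurable_pi_apply b) (measurable_pi_apply a)
  let e (σ : Perm (Fin n)) := MeasurableEquiv.arrowCongr' σ.symm (MeasurableEquiv.refl ℝ)
  have he (σ : Perm (Fin n)) (x : Fin n → ℝ) : e σ x = x ∘ σ := by
    ext i; simp [e, MeasurableEquiv.arrowCongr', Equiv.arrowCongr']
  have he_mp (σ : Perm (Fin n)) : MeasurePreserving (e σ) :=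
    volume_preserving_arrowCongr' _ _ (.id volume)
  -- off the null set of non-injective points, exactly one term of the sum is nonzero
  have hsum : F =ᵐ[volume] fun x => ∑ σ : Perm (Fin n), A.indicator F (e σ x) := by
    filter_upwards [ae_injective] with x hx
    obtain ⟨σ₀, hσ₀, huniq⟩ := exists_unique_strictAnti_comp_perm hx
    rw [sum_eq_single σ₀ (fun σ _ hσ => Set.indicator_of_notMem (fun h => hσ (huniq σ
      (by rwa [he] at h))) _) (by simp), he, Set.indicator_of_mem hσ₀, hF]
  calc ∫ x, F x = ∑ σ : Perm (Fin n), ∫ x, A.indicator F (e σ x) := by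
        rw [integral_congr_ae hsum]
        exact integral_finsetSum _ fun σ _ =>
          ((he_mp σ).integrable_comp_emb (e σ).measurableEmbedding).2 (hFi.indicator hA)
    _ = ∑ σ : Perm (Fin n), ∫ x in A, F x := by
        refine sum_congr rfl fun σ _ => ?_
        rw [← integral_indicator hA]
        exact (he_mp σ).integral_comp' (A.indicator F)
    _ = (n.factorial : ℝ) • ∫ x in A, F x := by
        rw [sum_const, card_univ, Fintype.card_perm, Fintype.card_fin, Nat.cast_smul_eq_nsmul]

theorem setIntegral_eq_factorial_smul_setIntegral_strictAnti_inter {s : Set (Fin n → ℝ)}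
    (hs : MeasurableSet s) (hs_perm : ∀ (σ : Perm (Fin n)) x, x ∘ σ ∈ s ↔ x ∈ s)
    (hF : ∀ (σ : Perm (Fin n)) x, F (x ∘ σ) = F x) (hFi : IntegrableOn F s) :
    ∫ x in s, F x = (n.factorial : ℝ) • ∫ x in {x | StrictAnti x} ∩ s, F x := by
  rw [← integral_indicator hs, ← setIntegral_indicator hs]
  refine integral_eq_factorial_smul_setIntegral_strictAnti (fun σ x => ?_)
    ((integrable_indicator_iff hs).2 hFi)
  by_cases hx : x ∈ s
  · rw [Set.indicator_of_mem hx, Set.indicator_of_mem ((hs_perm σ x).2 hx), hF]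
  · rw [Set.indicator_of_notMem hx, Set.indicator_of_notMem (mt (hs_perm σ x).1 hx)]

end Rearrangement

theorem Real.Gamma_add_nat_eq_mul_ascPochhammer {s : ℝ} (hs : ∀ k : ℕ, s ≠ -k) (i : ℕ) :
    Real.Gamma (s + i) = Real.Gamma s * (ascPochhammer ℝ i).eval s := by
  induction i with
  | zero => simp
  | succ i ih =>
    have hsi : s + i ≠ 0 := fun h => hs i (eq_neg_of_add_eq_zero_left h)
    rw [Nat.cast_succ, ← add_assoc, Real.Gamma_add_one hsi, ih, ascPochhammer_succ_eval]
    ring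

theorem Matrix.det_Gamma_add_nat {n : ℕ} {x : Fin n → ℝ} (hx : ∀ j (k : ℕ), x j ≠ -k) :
    (of fun i j : Fin n => Real.Gamma (x j + i)).det =
      (∏ j, Real.Gamma (x j)) * (vandermonde x).det := by
  have h : (of fun i j : Fin n => Real.Gamma (x j + i)) =
      of fun i j => Real.Gamma (x j) *
        (of fun i j : Fin n => (ascPochhammer ℝ i).eval (x j)) i j := by
    ext i j
    simp [Real.Gamma_add_nat_eq_mul_ascPochhammer (hx j)]
  rw [h, det_mul_row, det_eval_matrixOfPolynomials_eq_det_vandermonde x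
    (fun i => ascPochhammer ℝ i) (fun i => ascPochhammer_natDegree ℝ i)
    (fun i => monic_ascPochhammer ℝ i), ← det_transpose]
  rfl

theorem rpow_mul_exp_neg_mul_pow_mul_rpow_pow {y : ℝ} (hy : 0 < y) (θ c : ℝ) (i j : ℕ) :
    y ^ c * Real.exp (-y) * y ^ i * (y ^ θ) ^ j = Real.exp (-y) * y ^ (θ * j + c + 1 + i - 1) := by
  rw [← Real.rpow_natCast y i, ← Real.rpow_natCast (y ^ θ) j, ← Real.rpow_mul hy.le,
    show θ * j + c + 1 + i - 1 = c + i + θ * j by ring, Real.rpow_add hy, Real.rpow_add hy]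
  ring

section Laguerre

variable {θ c : ℝ}

theorem mul_natCast_add_add_one_add_natCast_pos (hθ : 0 ≤ θ) (hc : -1 < c) (i j : ℕ) :
    0 < θ * j + c + 1 + i := by
  have : 0 ≤ θ * j := by positivity
  have : (0 : ℝ) ≤ i := i.cast_nonneg
  linarith

theorem integrableOn_Ioi_rpow_mul_exp_neg_mul_pow_mul_rpow_pow (hθ : 0 ≤ θ) (hc : -1 < c)
    (i j : ℕ) :
    IntegrableOn (fun y => y ^ c * Real.exp (-y) * y ^ i * (y ^ θ) ^ j) (Set.Ioi 0) :=
  (Real.GammaIntegral_convergent (mul_natCast_add_add_one_add_natCast_pos hθ hc i j)).congr_fun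
    (fun _ hy => (rpow_mul_exp_neg_mul_pow_mul_rpow_pow hy θ c i j).symm) measurableSet_Ioi

theorem integral_Ioi_rpow_mul_exp_neg_mul_pow_mul_rpow_pow (hθ : 0 ≤ θ) (hc : -1 < c) (i j : ℕ) :
    ∫ y in Set.Ioi 0, y ^ c * Real.exp (-y) * y ^ i * (y ^ θ) ^ j =
      Real.Gamma (θ * j + c + 1 + i) := by
  rw [Real.Gamma_eq_integral (mul_natCast_add_add_one_add_natCast_pos hθ hc i j)]
  exact setIntegral_congr_fun measurableSet_Ioi
    fun _ hy => rpow_mul_exp_neg_mul_pow_mul_rpow_pow hy θ c i j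

theorem det_Gamma_laguerre (hθ : 0 ≤ θ) (hc : -1 < c) (n : ℕ) :
    (of fun i j : Fin n => Real.Gamma (θ * (j : ℕ) + c + 1 + (i : ℕ))).det =
      (∏ l : Fin n, Real.Gamma (θ * (l : ℝ) + c + 1)) * θ ^ (n * (n - 1) / 2) *
        ∏ l ∈ range n, (l.factorial : ℝ) := by
  have hx (j : Fin n) (k : ℕ) : θ * (j : ℕ) + c + 1 ≠ -k := fun h =>
    (mul_natCast_add_add_one_add_natCast_pos hθ hc k j).ne' (by rw [h, neg_add_cancel])
  have hV : (vandermonde fun j : Fin n => θ * (j : ℕ) + c + 1).det =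
      θ ^ (n * (n - 1) / 2) * ∏ l ∈ range n, (l.factorial : ℝ) := by
    simp_rw [add_assoc]
    rw [det_vandermonde_add (fun j : Fin n => θ * (j : ℕ)) (c + 1), det_vandermonde_mul,
      det_vandermonde_natCast]
  rw [det_Gamma_add_nat hx, hV, mul_assoc]

variable {n : ℕ}

noncomputable def laguerreMBDensity (θ c : ℝ) (x : Fin n → ℝ) : ℝ :=
  (of fun i k : Fin n => x k ^ c * Real.exp (-x k) * x k ^ (i : ℕ)).det *
    (of fun i k : Fin n => (x k ^ θ) ^ (i : ℕ)).det

theorem laguerreMBDensity_comp_perm (σ : Perm (Fin n)) (x : Fin n → ℝ) :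
    laguerreMBDensity θ c (x ∘ σ) = laguerreMBDensity θ c x :=
  det_mul_det_comp_perm (fun i y => y ^ c * Real.exp (-y) * y ^ (i : ℕ))
    (fun i y => (y ^ θ) ^ (i : ℕ)) x σ

theorem integrableOn_laguerreMBDensity (hθ : 0 ≤ θ) (hc : -1 < c) :
    IntegrableOn (laguerreMBDensity (n := n) θ c) (Set.univ.pi fun _ => Set.Ioi 0) := by
  rw [IntegrableOn, volume_pi, Measure.restrict_pi_pi]
  exact integrable_det_mul_det fun i j =>
    integrableOn_Ioi_rpow_mul_exp_neg_mul_pow_mul_rpow_pow hθ hc i j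

theorem setIntegral_laguerreMBDensity (hθ : 0 ≤ θ) (hc : -1 < c) :
    ∫ x in Set.univ.pi (fun _ : Fin n => Set.Ioi 0), laguerreMBDensity θ c x =
      n.factorial * (of fun i j : Fin n => Real.Gamma (θ * (j : ℕ) + c + 1 + (i : ℕ))).det := by
  rw [volume_pi, Measure.restrict_pi_pi]
  refine (integral_det_mul_det fun i j =>
    integrableOn_Ioi_rpow_mul_exp_neg_mul_pow_mul_rpow_pow hθ hc i j).trans ?_
  exact congrArg _ (congrArg det (ext fun i j =>
    integral_Ioi_rpow_mul_exp_neg_mul_pow_mul_rpow_pow hθ hc i j))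

end Laguerre

theorem stmt_2_general (n : ℕ) (θ c : ℝ) (hθ : 0 < θ) (hc : -1 < c) :
    ∫ lam in {lam : Fin n → ℝ | (∀ i j : Fin n, i < j → lam j < lam i) ∧ ∀ i, 0 < lam i},
      (∏ k, lam k ^ c * Real.exp (-lam k)) *
        ∏ j, ∏ k ∈ Finset.Ioi j, ((lam j - lam k) * (lam j ^ θ - lam k ^ θ))
    = (∏ l : Fin n, Real.Gamma (θ * (l : ℝ) + c + 1)) * θ ^ (n * (n - 1) / 2) *
        ∏ l ∈ Finset.range n, (Nat.factorial l : ℝ) := by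
  set P : Set (Fin n → ℝ) := Set.univ.pi fun _ => Set.Ioi 0
  have hS : {lam : Fin n → ℝ | (∀ i j : Fin n, i < j → lam j < lam i) ∧ ∀ i, 0 < lam i} =
      {x | StrictAnti x} ∩ P := by
    ext; simp [P, StrictAnti]
  have hP_perm (σ : Perm (Fin n)) (x : Fin n → ℝ) : x ∘ σ ∈ P ↔ x ∈ P := by
    simpa [P] using σ.forall_congr_right (q := fun i => 0 < x i)
  have hn : (n.factorial : ℝ) ≠ 0 := by positivity
  calc _ = ∫ x in {x | StrictAnti x} ∩ P, laguerreMBDensity θ c x := by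
        simp_rw [hS, prod_mul_prod_Ioi_sub_mul_sub]
        rfl
    _ = (n.factorial : ℝ)⁻¹ * ∫ x in P, laguerreMBDensity θ c x := by
        rw [setIntegral_eq_factorial_smul_setIntegral_strictAnti_inter
          (.univ_pi fun _ => measurableSet_Ioi) hP_perm laguerreMBDensity_comp_perm
          (integrableOn_laguerreMBDensity hθ.le hc), smul_eq_mul, inv_mul_cancel_left₀ hn]
    _ = (of fun i j : Fin n => Real.Gamma (θ * (j : ℕ) + c + 1 + (i : ℕ))).det := by
        rw [setIntegral_laguerreMBDensity hθ.le hc, inv_mul_cancel_left₀ hn]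
    _ = _ := det_Gamma_laguerre hθ.le hc n

/-- normalization constant of the Laguerre Muttalib–Borodin ensemble. -/
theorem stmt_2 (n : ℕ) (hn : 1 ≤ n) (θ c : ℝ) (hθ : 0 < θ) (hc : -1 < c) :
    ∫ lam in {lam : Fin n → ℝ | (∀ i j : Fin n, i < j → lam j < lam i) ∧ ∀ i, 0 < lam i},
      (∏ k, lam k ^ c * Real.exp (-lam k)) *
        ∏ j, ∏ k ∈ Finset.Ioi j, ((lam j - lam k) * (lam j ^ θ - lam k ^ θ))
    = (∏ l : Fin n, Real.Gamma (θ * (l : ℝ) + c + 1)) * θ ^ (n * (n - 1) / 2) *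
        ∏ l ∈ Finset.range n, (Nat.factorial l : ℝ) :=
  stmt_2_general n θ c hθ hc
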